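/- Conversely, if Q = gcd(P,v,w) (monic gcd), then gcd(P²,w) = Q². -/

import Mathlib

/-!
`Q²` divides `w`: it divides `P²`, hence `h`, and `v²`, hence `u * w`, while `Q` is coprime to `u`
because `gcd(u, v, w) = 1`. Conversely `D = gcd(P², w)` divides `h` and `u * w`, hence `v²`, so
`D ∣ gcd(P², v², w²) = gcd(P, v, w)² = Q²`.
-/

section GCDMonoid

variable {α : Type*} [CommMonoidWithZero α] [GCDMonoid α]

theorem gcd_pow_dvd_pow_gcd (a b : α) (k : ℕ) : gcd (a ^ k) (b ^ k) ∣ gcd a b ^ k := by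
  obtain ⟨a', b', ha, hb, hunit⟩ := extract_gcd a b
  have hcop : IsUnit (gcd (a' ^ k) (b' ^ k)) :=
    gcd_isUnit_iff_isRelPrime.2 (gcd_isUnit_iff_isRelPrime.1 hunit).pow
  calc gcd (a ^ k) (b ^ k) = gcd (gcd a b ^ k * a' ^ k) (gcd a b ^ k * b' ^ k) := by
        rw [← mul_pow, ← mul_pow, ← ha, ← hb]
    _ ∣ gcd a b ^ k * gcd (a' ^ k) (b' ^ k) := (gcd_mul_left' _ _ _).dvd
    _ ∣ gcd a b ^ k := hcop.mul_right_dvd.2 dvd_rfl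

theorem dvd_pow_gcd_gcd {d a b c : α} {k : ℕ} (ha : d ∣ a ^ k) (hb : d ∣ b ^ k)
    (hc : d ∣ c ^ k) : d ∣ gcd a (gcd b c) ^ k :=
  calc d ∣ gcd (a ^ k) (gcd (b ^ k) (c ^ k)) := dvd_gcd ha (dvd_gcd hb hc)
    _ ∣ gcd (a ^ k) (gcd b c ^ k) := gcd_dvd_gcd dvd_rfl (gcd_pow_dvd_pow_gcd b c k)
    _ ∣ gcd a (gcd b c) ^ k := gcd_pow_dvd_pow_gcd a (gcd b c) k

end GCDMonoid

section SumOfSquareAndProduct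

variable {R : Type*} [CommRing R] {P u v w : R}

theorem sq_gcd_gcd_dvd_of_sq_dvd_sq_add_mul [GCDMonoid R] (hP : P ^ 2 ∣ v ^ 2 + u * w)
    (hcop : IsUnit (gcd u (gcd v w))) : gcd P (gcd v w) ^ 2 ∣ w := by
  set Q := gcd P (gcd v w)
  have hQvw : Q ∣ gcd v w := gcd_dvd_right _ _
  have hQv : Q ^ 2 ∣ v ^ 2 := pow_dvd_pow_of_dvd (hQvw.trans (gcd_dvd_left _ _)) 2
  have hQh : Q ^ 2 ∣ v ^ 2 + u * w := (pow_dvd_pow_of_dvd (gcd_dvd_left _ _) 2).trans hP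
  have hQu : IsRelPrime (Q ^ 2) u :=
    (gcd_isUnit_iff_isRelPrime.1
      (isUnit_of_dvd_unit (gcd_dvd_gcd dvd_rfl hQvw) hcop)).symm.pow_left
  exact hQu.dvd_of_dvd_mul_left ((dvd_add_right hQv).1 hQh)

theorem gcd_sq_dvd_sq_gcd_gcd_of_sq_dvd_sq_add_mul [GCDMonoid R] (hP : P ^ 2 ∣ v ^ 2 + u * w) :
    gcd (P ^ 2) w ∣ gcd P (gcd v w) ^ 2 := by
  set D := gcd (P ^ 2) w
  have hDw : D ∣ w := gcd_dvd_right _ _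
  have hDv : D ∣ v ^ 2 := (dvd_add_left (hDw.mul_left u)).1 ((gcd_dvd_left _ _).trans hP)
  exact dvd_pow_gcd_gcd (gcd_dvd_left _ _) hDv (hDw.trans (dvd_pow_self w two_ne_zero))

theorem gcd_sq_eq_sq_gcd_gcd_of_sq_dvd_sq_add_mul [StrongNormalizedGCDMonoid R]
    (hP : P ^ 2 ∣ v ^ 2 + u * w) (hcop : IsUnit (gcd u (gcd v w))) :
    gcd (P ^ 2) w = gcd P (gcd v w) ^ 2 := by
  rw [gcd_eq_normalize (gcd_sq_dvd_sq_gcd_gcd_of_sq_dvd_sq_add_mul hP)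
    (dvd_gcd (pow_dvd_pow_of_dvd (gcd_dvd_left _ _) 2)
      (sq_gcd_gcd_dvd_of_sq_dvd_sq_add_mul hP hcop)),
    sq, normalize_mul, normalize_gcd]

end SumOfSquareAndProduct

theorem stmt_3_general
    (h P u v w : Polynomial ℂ)
    (hPdvd : P ^ 2 ∣ h)
    (heq : v ^ 2 + u * w = h)
    (hcop : gcd u (gcd v w) = 1)
    (Q : Polynomial ℂ) (hQ : Q = gcd P (gcd v w)) :
    gcd (P ^ 2) w = Q ^ 2 := by
  subst hQ heq
  exact gcd_sq_eq_sq_gcd_gcd_of_sq_dvd_sq_add_mul hPdvd (hcop ▸ isUnit_one)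

/-- Lemma (Deg), converse of the second part: if `Q = gcd(P, v, w)` (monic gcd),
then `gcd(P², w) = Q²`. -/
theorem stmt_3
    (g : ℕ) (hg : 1 ≤ g) (h h' P u v w : Polynomial ℂ)
    (hhmon : h.Monic) (hhdeg : h.natDegree = 2 * g + 1)
    (hPmon : P.Monic) (hPdvd : P ^ 2 ∣ h)
    (hPmax : ∀ S : Polynomial ℂ, S.Monic → S ^ 2 ∣ h → S.natDegree ≤ P.natDegree)
    (hh' : h = P ^ 2 * h')
    (humon : u.Monic) (hudeg : u.natDegree = g)
    (hwmon : w.Monic) (hwdeg : w.natDegree = g + 1)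
    (hvdeg : v.degree ≤ ((g - 1 : ℕ) : WithBot ℕ))
    (heq : v ^ 2 + u * w = h)
    (hcop : gcd u (gcd v w) = 1)
    (Q : Polynomial ℂ) (hQ : Q = gcd P (gcd v w)) :
    gcd (P ^ 2) w = Q ^ 2 :=
  stmt_3_general h P u v w hPdvd heq hcop Q hQ
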